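/- For x, y ∈ ℝ^d, define φ(x) := (√d₀, √d₁ x, √d₂ x^{⊗2}, √d₃ x^{⊗3}, …) with d₀ = 1/4 + Σ_{p≥1} c_{2p}/(d+1)^{2p}, d₁ = 1/4 + Σ_{p≥1} 2p c_{2p}/(d+1)^{2p}, and d_k = Σ_{p≥⌈k/2⌉} c_{2p} binom(2p,k)/(d+1)^{2p} for k ≥ 2, where c_{2p} = (2p−3)!!(d+1)/(2π(2p−2)!!(2p−1)). Then ⟨φ(x), φ(y)⟩ = Σ_{k≥0} d_k (x^T y)^k = x̃^T ỹ · (π − arccos(x̃^T ỹ/(d+1)))/(2π), where x̃ = (x,1), ỹ = (y,1), provided ∥x∥ = ∥y∥ = √d. -/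

import Mathlib

open Real Finset


/-- `c_{2p} = (2p−3)!!·(d+1)/(2π·(2p−2)!!·(2p−1))`. -/
noncomputable def c2p (d p : ℕ) : ℝ :=
  (Nat.doubleFactorial (2 * p - 3) : ℝ) * ((d : ℝ) + 1) /
    (2 * Real.pi * (Nat.doubleFactorial (2 * p - 2) : ℝ) * (2 * (p : ℝ) - 1))

/-- Coefficients `d_k` of the NTK feature map: `d₀ = 1/4 + Σ_{p≥1} c_{2p}/(d+1)^{2p}`,
`d₁ = 1/4 + Σ_{p≥1} 2p·c_{2p}/(d+1)^{2p}`, and for `k ≥ 2`,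
`d_k = Σ_{p≥⌈k/2⌉} c_{2p}·binom(2p,k)/(d+1)^{2p}` (here `⌈k/2⌉ = (k+1)/2` in `ℕ`). -/
noncomputable def dcoef (d : ℕ) : ℕ → ℝ
  | 0 => 1 / 4 + ∑' q : ℕ, c2p d (q + 1) / ((d : ℝ) + 1) ^ (2 * (q + 1))
  | 1 => 1 / 4 + ∑' q : ℕ, (2 * ((q : ℝ) + 1)) * c2p d (q + 1) / ((d : ℝ) + 1) ^ (2 * (q + 1))
  | k => ∑' q : ℕ,
      c2p d ((k + 1) / 2 + q) * (Nat.choose (2 * ((k + 1) / 2 + q)) k : ℝ) /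
        ((d : ℝ) + 1) ^ (2 * ((k + 1) / 2 + q))

/-- `bb q = (2q-1)!!/(2q)!!`, defined recursively. -/
noncomputable def bb : ℕ → ℝ
  | 0 => 1
  | (q+1) => bb q * (2*q+1) / (2*q+2)

lemma bb_pos (q : ℕ) : 0 < bb q := by
  induction q with
  | zero => norm_num [bb]
  | succ q ih => rw [bb]; positivity

lemma bb_le_one (q : ℕ) : bb q ≤ 1 := by
  induction q with
  | zero => norm_num [bb]
  | succ q ih =>
      rw [bb, div_le_one (by positivity)]
      nlinarith [bb_pos q]

lemma bb_sq (q : ℕ) : bb q ^ 2 * (2*q+1) ≤ 1 := by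
  induction q with
  | zero => norm_num [bb]
  | succ q ih =>
      have h := bb_pos q
      rw [bb]
      rw [div_pow, div_mul_eq_mul_div, div_le_one (by positivity)]
      push_cast
      nlinarith [sq_nonneg (bb q), sq_nonneg ((q:ℝ)+1)]

/-- recurrence in weighted form -/
lemma bb_rec (q : ℕ) : ((q:ℝ) + 1) * bb (q+1) = ((q:ℝ) + 1/2) * bb q := by
  rw [bb]; field_simp

/-- the central-binomial convolution identity -/
lemma bb_conv (n : ℕ) : ∑ i ∈ range (n+1), bb i * bb (n - i) = 1 := by
  induction n with
  | zero => norm_num [bb]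
  | succ n ih =>
      -- symmetry lemma, for general m
      have sym : ∀ m : ℕ, ∑ i ∈ range (m+1), (i:ℝ) * (bb i * bb (m - i))
          = (m:ℝ)/2 * ∑ i ∈ range (m+1), bb i * bb (m - i) := by
        intro m
        have h1 : ∑ i ∈ range (m+1), (i:ℝ) * (bb i * bb (m - i))
            = ∑ i ∈ range (m+1), ((m - i : ℕ):ℝ) * (bb (m - i) * bb i) := by
          rw [← Finset.sum_range_reflect (fun i => ((m - i : ℕ):ℝ) * (bb (m-i) * bb i)) (m+1)]
          apply Finset.sum_congr rfl
          intro i hi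
          simp only [Finset.mem_range] at hi
          have h2 : m + 1 - 1 - i = m - i := by omega
          have h3 : m - (m - i) = i := by omega
          rw [h2, h3]
        have h4 : (2:ℝ) * ∑ i ∈ range (m+1), (i:ℝ) * (bb i * bb (m - i))
            = (m:ℝ) * ∑ i ∈ range (m+1), bb i * bb (m - i) := by
          rw [two_mul]
          nth_rewrite 2 [h1]
          rw [← Finset.sum_add_distrib, Finset.mul_sum]
          apply Finset.sum_congr rfl
          intro i hi
          simp only [Finset.mem_range] at hi
          have : ((m - i : ℕ):ℝ) = (m:ℝ) - (i:ℝ) := by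
            rw [Nat.cast_sub (by omega)]
          rw [this]; ring
        linarith
      -- main step
      have key : ((n:ℝ)+1)/2 * ∑ i ∈ range (n+2), bb i * bb (n+1-i)
          = ((n:ℝ)+1)/2 := by
        have e1 : ∑ i ∈ range (n+2), (i:ℝ) * (bb i * bb (n+1-i))
            = ((n:ℝ)+1)/2 * ∑ i ∈ range (n+2), bb i * bb (n+1-i) := by
          have := sym (n+1); push_cast at this ⊢; convert this using 2 <;> norm_num
        have e2 : ∑ i ∈ range (n+2), (i:ℝ) * (bb i * bb (n+1-i))
            = ∑ i ∈ range (n+1), ((i:ℝ)+1) * (bb (i+1) * bb (n-i)) := by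
          rw [Finset.sum_range_succ' (fun i => (i:ℝ) * (bb i * bb (n+1-i))) (n+1)]
          simp only [Nat.cast_zero, zero_mul, add_zero]
          apply Finset.sum_congr rfl
          intro i hi
          have : n + 1 - (i+1) = n - i := by omega
          rw [this]; push_cast; ring
        have e3 : ∑ i ∈ range (n+1), ((i:ℝ)+1) * (bb (i+1) * bb (n-i))
            = ∑ i ∈ range (n+1), ((i:ℝ)+1/2) * (bb i * bb (n-i)) := by
          apply Finset.sum_congr rfl
          intro i hi
          have := bb_rec i
          nlinarith [bb_pos (n-i)]
        have e4 : ∑ i ∈ range (n+1), ((i:ℝ)+1/2) * (bb i * bb (n-i))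
            = (n:ℝ)/2 * 1 + 1/2 * 1 := by
          rw [← ih]
          rw [← sym n, Finset.mul_sum, ← Finset.sum_add_distrib]
          apply Finset.sum_congr rfl
          intro i hi; ring
        rw [← e1, e2, e3, e4]; ring
      have hpos : ((n:ℝ)+1)/2 ≠ 0 := by positivity
      have h2 : ∑ i ∈ range (n+2), bb i * bb (n+1-i) = 1 :=
        mul_left_cancel₀ hpos (by rw [mul_one]; exact key)
      exact h2

/-- `aa q = (2q-1)!!/((2q)!!(2q+1))`, the arcsin Taylor coefficients. -/
noncomputable def aa (q : ℕ) : ℝ := bb q / (2*q+1)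

lemma aa_pos (q : ℕ) : 0 < aa q :=
  div_pos (bb_pos q) (by positivity)

lemma bb_le_inv_sqrt (q : ℕ) : bb q ≤ 1 / Real.sqrt (2*q+1) := by
  have h1 : bb q = Real.sqrt (bb q ^ 2) := (Real.sqrt_sq (bb_pos q).le).symm
  have h2 : bb q ^ 2 ≤ 1 / (2*(q:ℝ)+1) := by
    rw [le_div_iff₀ (by positivity)]
    have := bb_sq q; push_cast at this ⊢; linarith
  calc bb q = Real.sqrt (bb q ^ 2) := h1
    _ ≤ Real.sqrt (1 / (2*(q:ℝ)+1)) := Real.sqrt_le_sqrt h2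
    _ = 1 / Real.sqrt (2*(q:ℝ)+1) := by
        rw [Real.sqrt_div' 1 (by positivity)]; norm_num

lemma summable_aa : Summable aa := by
  refine Summable.of_nonneg_of_le (g := aa)
    (f := fun q : ℕ => 1 / (((q:ℝ)+1) * Real.sqrt ((q:ℝ)+1))) (fun q => (aa_pos q).le) ?_ ?_
  · intro q
    have hb := bb_le_inv_sqrt q
    have h1 : (0:ℝ) < (q:ℝ) + 1 := by positivity
    have h2 : ((q:ℝ)+1) ≤ 2*(q:ℝ)+1 := by linarith [Nat.cast_nonneg (α := ℝ) q]
    have hs : Real.sqrt ((q:ℝ)+1) ≤ Real.sqrt (2*(q:ℝ)+1) := Real.sqrt_le_sqrt h2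
    have hsp : 0 < Real.sqrt ((q:ℝ)+1) := Real.sqrt_pos.2 h1
    calc aa q = bb q / (2*(q:ℝ)+1) := by unfold aa; norm_num
      _ ≤ (1 / Real.sqrt (2*(q:ℝ)+1)) / (2*(q:ℝ)+1) := by
          apply div_le_div_of_nonneg_right ?_ (by positivity)
          · exact hb
      _ = 1 / (Real.sqrt (2*(q:ℝ)+1) * (2*(q:ℝ)+1)) := by rw [div_div]
      _ ≤ 1 / (Real.sqrt ((q:ℝ)+1) * ((q:ℝ)+1)) := by
          apply one_div_le_one_div_of_le (by positivity)
          exact mul_le_mul hs h2 h1.le (Real.sqrt_nonneg _)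
      _ = 1 / (((q:ℝ)+1) * Real.sqrt ((q:ℝ)+1)) := by ring_nf
  · have h0 : Summable (fun n : ℕ => 1 / (n:ℝ) ^ ((3:ℝ)/2)) :=
      Real.summable_one_div_nat_rpow.2 (by norm_num)
    have h1 : Summable (fun n : ℕ => 1 / ((n+1:ℕ):ℝ) ^ ((3:ℝ)/2)) :=
      (summable_nat_add_iff 1).2 h0
    apply h1.congr
    intro n
    have hp : (0:ℝ) < (n:ℝ)+1 := by positivity
    push_cast
    rw [show ((3:ℝ)/2) = 1 + 1/2 by norm_num, Real.rpow_add hp, Real.rpow_one,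
      ← Real.sqrt_eq_rpow]

lemma hasSum_geom_sqrt {v : ℝ} (h0 : 0 ≤ v) (h1 : v < 1) :
    HasSum (fun p => bb p * v ^ p) (1 / Real.sqrt (1 - v)) := by
  have hsum : Summable (fun p => bb p * v ^ p) := by
    apply Summable.of_nonneg_of_le
      (fun p => mul_nonneg (bb_pos p).le (pow_nonneg h0 p)) (f := fun p => v ^ p)
    · intro p
      calc bb p * v ^ p ≤ 1 * v ^ p :=
            mul_le_mul_of_nonneg_right (bb_le_one p) (pow_nonneg h0 p)
        _ = v ^ p := one_mul _
    · exact summable_geometric_of_lt_one h0 h1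
  have hnorm : Summable (fun p => ‖bb p * v ^ p‖) := by
    apply hsum.congr; intro p
    rw [Real.norm_eq_abs, abs_of_nonneg (mul_nonneg (bb_pos p).le (pow_nonneg h0 p))]
  have hsq : (∑' p, bb p * v ^ p) * (∑' p, bb p * v ^ p) = (1 - v)⁻¹ := by
    rw [tsum_mul_tsum_eq_tsum_sum_range_of_summable_norm hnorm hnorm]
    rw [← tsum_geometric_of_lt_one h0 h1]
    apply tsum_congr; intro n
    calc ∑ k ∈ range (n+1), (bb k * v ^ k) * (bb (n-k) * v ^ (n-k))
        = ∑ k ∈ range (n+1), (bb k * bb (n-k)) * v ^ n := by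
          apply Finset.sum_congr rfl; intro k hk
          simp only [Finset.mem_range] at hk
          rw [show (bb k * v ^ k) * (bb (n-k) * v ^ (n-k)) = (bb k * bb (n-k)) * (v^k * v^(n-k)) by ring,
            ← pow_add, show k + (n-k) = n by omega]
      _ = v ^ n := by rw [← Finset.sum_mul, bb_conv, one_mul]
  have hpos : 0 < ∑' p, bb p * v ^ p := by
    have h00 : bb 0 * v ^ 0 ≤ ∑' p, bb p * v ^ p :=
      Summable.le_tsum hsum 0 (fun j _ => mul_nonneg (bb_pos j).le (pow_nonneg h0 j))
    simp [bb] at h00; linarith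
  have hval : (∑' p, bb p * v ^ p) = 1 / Real.sqrt (1 - v) := by
    have h1v : (0:ℝ) < 1 - v := by linarith
    have : (∑' p, bb p * v ^ p) = Real.sqrt ((∑' p, bb p * v ^ p)^2) :=
      (Real.sqrt_sq hpos.le).symm
    rw [this, sq, hsq, Real.sqrt_inv, one_div]
  exact hval ▸ hsum.hasSum

lemma aa_mul_odd (p : ℕ) : aa p * (2*(p:ℝ)+1) = bb p := by
  unfold aa; field_simp

/-- The sine-compactified arcsin series identity. -/
lemma arcsin_series_sin (r : ℝ) (hr0 : 0 ≤ r) (hr1 : r < 1) (θ : ℝ) :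
    ∑' p, aa p * (r * Real.sin θ) ^ (2*p+1) = Real.arcsin (r * Real.sin θ) := by
  rcases eq_or_lt_of_le hr0 with h | hr0'
  · simp [← h]
  set g : ℕ → ℝ → ℝ := fun p θ => aa p * (r * Real.sin θ) ^ (2*p+1) with hg
  set g' : ℕ → ℝ → ℝ := fun p θ => bb p * r^(2*p+1) * (Real.sin θ)^(2*p) * Real.cos θ with hg'
  have hrs : ∀ θ, |r * Real.sin θ| < 1 := by
    intro θ
    rw [abs_mul, abs_of_pos hr0']
    calc r * |Real.sin θ| ≤ r * 1 :=
          mul_le_mul_of_nonneg_left (Real.abs_sin_le_one θ) hr0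
      _ < 1 := by linarith
  have hderiv : ∀ (p : ℕ) (θ : ℝ), HasDerivAt (g p) (g' p θ) θ := by
    intro p θ
    have h1 : HasDerivAt (fun θ : ℝ => r * Real.sin θ) (r * Real.cos θ) θ :=
      (Real.hasDerivAt_sin θ).const_mul r
    have h2 := (h1.pow (2*p+1)).const_mul (aa p)
    refine h2.congr_deriv (Eq.symm ?_)
    simp only [hg']
    rw [show 2*p+1-1 = 2*p by omega, mul_pow]
    push_cast
    linear_combination (-(r^(2*p+1) * Real.sin θ^(2*p) * Real.cos θ)) * (aa_mul_odd p)
  have hbound : ∀ (p : ℕ) (θ : ℝ), ‖g' p θ‖ ≤ r^(2*p+1) := by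
    intro p θ
    simp only [hg', Real.norm_eq_abs]
    rw [abs_mul, abs_mul, abs_mul]
    rw [abs_of_pos (bb_pos p), abs_of_nonneg (pow_nonneg hr0 _), abs_pow]
    have hr' : (0:ℝ) ≤ r^(2*p+1) := pow_nonneg hr0 _
    have b1 : (0:ℝ) ≤ bb p := (bb_pos p).le
    have s1 : |Real.sin θ|^(2*p) ≤ 1 := pow_le_one₀ (abs_nonneg _) (Real.abs_sin_le_one θ)
    have c1 : |Real.cos θ| ≤ 1 := Real.abs_cos_le_one θ
    have hA : (0:ℝ) ≤ bb p * r^(2*p+1) * |Real.sin θ|^(2*p) :=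
      mul_nonneg (mul_nonneg b1 hr') (pow_nonneg (abs_nonneg _) _)
    have e1 : bb p * r^(2*p+1) * |Real.sin θ|^(2*p) * |Real.cos θ|
        ≤ bb p * r^(2*p+1) * |Real.sin θ|^(2*p) := mul_le_of_le_one_right hA c1
    have e2 : bb p * r^(2*p+1) * |Real.sin θ|^(2*p) ≤ bb p * r^(2*p+1) :=
      mul_le_of_le_one_right (mul_nonneg b1 hr') s1
    have e3 : bb p * r^(2*p+1) ≤ 1 * r^(2*p+1) := mul_le_mul_of_nonneg_right (bb_le_one p) hr'
    rw [one_mul] at e3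
    linarith
  have hsumu : Summable (fun p : ℕ => r^(2*p+1)) := by
    have : Summable (fun p : ℕ => r * (r^2)^p) := by
      apply Summable.mul_left
      exact summable_geometric_of_lt_one (by positivity) (by nlinarith)
    apply this.congr; intro p; rw [pow_add, pow_mul, pow_one]; ring
  have hsum0 : Summable (fun p => g p 0) := by
    apply summable_zero.congr
    intro p; simp [hg]
  have hF : ∀ θ, HasDerivAt (fun z => ∑' p, g p z) (∑' p, g' p θ) θ :=
    fun θ => hasDerivAt_tsum hsumu hderiv hbound hsum0 θ
  -- compute the derivative sum
  have hderiv_val : ∀ θ, (∑' p, g' p θ)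
      = 1 / Real.sqrt (1 - (r * Real.sin θ)^2) * (r * Real.cos θ) := by
    intro θ
    have hv0 : 0 ≤ (r * Real.sin θ)^2 := sq_nonneg _
    have hv1 : (r * Real.sin θ)^2 < 1 := by
      have := hrs θ; nlinarith [abs_nonneg (r * Real.sin θ), sq_abs (r * Real.sin θ)]
    have hgs := (hasSum_geom_sqrt hv0 hv1).mul_right (r * Real.cos θ)
    have heq : ∀ p : ℕ, bb p * ((r*Real.sin θ)^2)^p * (r*Real.cos θ) = g' p θ := by
      intro p
      simp only [hg']
      rw [show ((r*Real.sin θ)^2)^p = (r*Real.sin θ)^(2*p) by rw [← pow_mul], mul_pow]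
      ring
    calc (∑' p, g' p θ)
        = ∑' p, bb p * ((r*Real.sin θ)^2)^p * (r*Real.cos θ) :=
          tsum_congr (fun p => (heq p).symm)
      _ = 1 / Real.sqrt (1 - (r * Real.sin θ)^2) * (r * Real.cos θ) := hgs.tsum_eq
  -- derivative of arcsin composed
  have harc : ∀ θ, HasDerivAt (fun z => Real.arcsin (r * Real.sin z))
      (1 / Real.sqrt (1 - (r * Real.sin θ)^2) * (r * Real.cos θ)) θ := by
    intro θ
    have h1 : HasDerivAt (fun z : ℝ => r * Real.sin z) (r * Real.cos θ) θ :=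
      (Real.hasDerivAt_sin θ).const_mul r
    have hne1 : r * Real.sin θ ≠ -1 := by
      intro h; have := hrs θ; rw [h] at this; norm_num at this
    have hne2 : r * Real.sin θ ≠ 1 := by
      intro h; have := hrs θ; rw [h] at this; norm_num at this
    exact (Real.hasDerivAt_arcsin hne1 hne2).comp θ h1
  -- difference has zero derivative
  set D : ℝ → ℝ := fun θ => (∑' p, g p θ) - Real.arcsin (r * Real.sin θ) with hD
  have hDd : ∀ θ, HasDerivAt D 0 θ := by
    intro θ
    have h := (hF θ).sub (harc θ)
    rwa [hderiv_val, sub_self] at h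
  have hconst : D θ = D 0 :=
    is_const_of_deriv_eq_zero (fun z => (hDd z).differentiableAt)
      (fun z => (hDd z).deriv) θ 0
  have hD0 : D 0 = 0 := by
    simp only [hD, Real.sin_zero, mul_zero, Real.arcsin_zero, sub_zero]
    have : ∀ p : ℕ, g p 0 = 0 := by
      intro p; simp [hg]
    rw [tsum_congr this, tsum_zero]
  have := hconst.trans hD0
  simp only [hD, sub_eq_zero] at this
  exact this

/-- arcsin series on the open interval. -/
lemma arcsin_series {u : ℝ} (h1 : |u| < 1) :
    ∑' p, aa p * u ^ (2*p+1) = Real.arcsin u := by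
  set r := (|u|+1)/2 with hr
  have hrpos : 0 < r := by positivity
  have hr1 : r < 1 := by rw [hr]; linarith
  have hur : |u| ≤ r := by rw [hr]; linarith [abs_nonneg u]
  have hu1 : -1 ≤ u / r := by
    rw [le_div_iff₀ hrpos]
    have := neg_abs_le u; linarith
  have hu2 : u / r ≤ 1 := by
    rw [div_le_one hrpos]
    have := le_abs_self u; linarith
  have hs : Real.sin (Real.arcsin (u/r)) = u / r := Real.sin_arcsin hu1 hu2
  have h := arcsin_series_sin r hrpos.le hr1 (Real.arcsin (u/r))
  rw [hs, show r * (u/r) = u by field_simp] at h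
  exact h

/-- sum of the coefficients is `π/2`. -/
lemma hasSum_aa_pi : HasSum aa (Real.pi/2) := by
  have hc : Continuous (fun θ : ℝ => ∑' p, aa p * (Real.sin θ)^(2*p+1)) := by
    refine continuous_tsum (u := aa) ?_ summable_aa ?_
    · intro p
      exact continuous_const.mul (Real.continuous_sin.pow _)
    · intro p θ
      rw [Real.norm_eq_abs, abs_mul, abs_of_pos (aa_pos p), abs_pow]
      calc aa p * |Real.sin θ| ^ (2*p+1) ≤ aa p * 1 :=
            mul_le_mul_of_nonneg_left
              (pow_le_one₀ (abs_nonneg _) (Real.abs_sin_le_one θ)) (aa_pos p).le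
        _ = aa p := mul_one _
  set θn : ℕ → ℝ := fun n => Real.pi/2 - 1/((n:ℝ)+1) with hθn
  have htend : Filter.Tendsto θn Filter.atTop (nhds (Real.pi/2)) := by
    have h0 := tendsto_one_div_add_atTop_nhds_zero_nat (𝕜 := ℝ)
    have h1 := (tendsto_const_nhds (x := Real.pi/2) (f := Filter.atTop (α := ℕ))).sub h0
    rw [sub_zero] at h1
    simp only [hθn]
    exact h1
  have hsin : ∀ n, |Real.sin (θn n)| < 1 := by
    intro n
    simp only [hθn]
    have hn1 : 1/((n:ℝ)+1) ≤ 1 := by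
      rw [div_le_one (by positivity)]; linarith [Nat.cast_nonneg (α := ℝ) n]
    have hn0 : 0 < 1/((n:ℝ)+1) := by positivity
    have hpi := Real.pi_gt_three
    have h1 : 0 ≤ Real.pi/2 - 1/((n:ℝ)+1) := by linarith
    have h2 : Real.pi/2 - 1/((n:ℝ)+1) < Real.pi/2 := by linarith
    have hs1 : Real.sin (Real.pi/2 - 1/((n:ℝ)+1)) < 1 := by
      have hmem1 : Real.pi/2 - 1/((n:ℝ)+1) ∈ Set.Icc (-(Real.pi/2)) (Real.pi/2) :=
        ⟨by linarith, by linarith⟩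
      have hmem2 : Real.pi/2 ∈ Set.Icc (-(Real.pi/2)) (Real.pi/2) := ⟨by linarith, le_rfl⟩
      have := Real.strictMonoOn_sin hmem1 hmem2 h2
      rwa [Real.sin_pi_div_two] at this
    have hs0 : 0 ≤ Real.sin (Real.pi/2 - 1/((n:ℝ)+1)) :=
      Real.sin_nonneg_of_nonneg_of_le_pi h1 (by linarith)
    rw [abs_lt]; exact ⟨by linarith, hs1⟩
  have heqn : ∀ n, (∑' p, aa p * (Real.sin (θn n))^(2*p+1))
      = Real.arcsin (Real.sin (θn n)) := fun n => arcsin_series (hsin n)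
  have lim1 : Filter.Tendsto (fun n => ∑' p, aa p * (Real.sin (θn n))^(2*p+1))
      Filter.atTop (nhds (∑' p, aa p * (Real.sin (Real.pi/2))^(2*p+1))) :=
    ((hc.tendsto _).comp htend)
  have lim2 : Filter.Tendsto (fun n => Real.arcsin (Real.sin (θn n)))
      Filter.atTop (nhds (Real.arcsin (Real.sin (Real.pi/2)))) :=
    (((Real.continuous_arcsin.comp Real.continuous_sin).tendsto _).comp htend)
  have lim1' : Filter.Tendsto (fun n => Real.arcsin (Real.sin (θn n)))
      Filter.atTop (nhds (∑' p, aa p * (Real.sin (Real.pi/2))^(2*p+1))) := by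
    apply lim1.congr; intro n; exact heqn n
  have hval := tendsto_nhds_unique lim1' lim2
  rw [Real.sin_pi_div_two, Real.arcsin_one] at hval
  simp only [one_pow, mul_one] at hval
  exact hval ▸ summable_aa.hasSum

/-- arcsin series including the right endpoint. -/
lemma hasSum_aa_pow {u : ℝ} (h1 : -1 < u) (h2 : u ≤ 1) :
    HasSum (fun p => aa p * u ^ (2*p+1)) (Real.arcsin u) := by
  have habs : |u| ≤ 1 := abs_le.2 ⟨h1.le, h2⟩
  have hsum : Summable (fun p => aa p * u ^ (2*p+1)) := by
    rw [← summable_abs_iff]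
    apply Summable.of_nonneg_of_le (fun p => abs_nonneg _) ?_ summable_aa
    intro p
    rw [abs_mul, abs_of_pos (aa_pos p), abs_pow]
    calc aa p * |u| ^ (2*p+1) ≤ aa p * 1 :=
          mul_le_mul_of_nonneg_left (pow_le_one₀ (abs_nonneg _) habs) (aa_pos p).le
      _ = aa p := mul_one _
  rcases eq_or_lt_of_le h2 with h | h
  · subst h
    simpa [Real.arcsin_one] using hasSum_aa_pi
  · rw [hsum.hasSum_iff]
    exact arcsin_series (abs_lt.2 ⟨h1, h⟩)

lemma bb_fact (q : ℕ) :
    bb q = (Nat.doubleFactorial (2*q+2-3) : ℝ) / (Nat.doubleFactorial (2*q) : ℝ) := by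
  induction q with
  | zero => norm_num [bb, Nat.doubleFactorial]
  | succ q ih =>
      have hnum : Nat.doubleFactorial (2*(q+1)+2-3) = (2*q+1) * Nat.doubleFactorial (2*q+2-3) := by
        match q with
        | 0 => rfl
        | (s+1) =>
            have h1 : 2*(s+1+1)+2-3 = (2*s+1)+2 := by omega
            have h2 : 2*(s+1)+2-3 = 2*s+1 := by omega
            rw [h1, h2, Nat.doubleFactorial_add_two]
            ring
      have hden : Nat.doubleFactorial (2*(q+1)) = (2*q+2) * Nat.doubleFactorial (2*q) := by
        have h1 : 2*(q+1) = (2*q)+2 := by omega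
        rw [h1, Nat.doubleFactorial_add_two]
      rw [bb, ih, hnum, hden]
      have d1 : (0:ℝ) < (Nat.doubleFactorial (2*q) : ℝ) := by
        exact_mod_cast Nat.doubleFactorial_pos _
      push_cast
      field_simp

lemma c2p_eq (d q : ℕ) : c2p d (q+1) = ((d:ℝ)+1) / (2*Real.pi) * aa q := by
  unfold c2p aa
  have h1 : 2*(q+1)-3 = 2*q+2-3 := by omega
  have h2 : 2*(q+1)-2 = 2*q := by omega
  rw [h1, h2, bb_fact]
  have d1 : (0:ℝ) < (Nat.doubleFactorial (2*q) : ℝ) := by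
    exact_mod_cast Nat.doubleFactorial_pos _
  have hpi := Real.pi_pos
  have hX : ((Nat.doubleFactorial (2*q) : ℕ):ℝ) ≠ 0 := ne_of_gt d1
  have hπ : Real.pi ≠ 0 := Real.pi_ne_zero
  have hq : (2*(q:ℝ)+1) ≠ 0 := by positivity
  rw [show (2*(((q:ℕ)+1:ℕ)):ℝ) - 1 = 2*(q:ℝ)+1 by push_cast; ring]
  field_simp

lemma c2p_pos (d q : ℕ) : 0 < c2p d (q+1) := by
  rw [c2p_eq]
  have := aa_pos q
  have := Real.pi_pos
  have : (0:ℝ) < (d:ℝ)+1 := by positivity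
  positivity

lemma summable_c2p (d : ℕ) : Summable (fun q => c2p d (q+1)) := by
  have := (summable_aa.mul_left (((d:ℝ)+1) / (2*Real.pi)))
  apply this.congr
  intro q
  rw [c2p_eq]

lemma hasSum_dcoef (d : ℕ) (hd : 1 ≤ d) (t : ℝ) (ht : |t| ≤ d) :
    HasSum (fun k => dcoef d k * t ^ k)
      ((t + 1) * (Real.pi - Real.arccos ((t + 1) / ((d:ℝ) + 1))) / (2 * Real.pi)) := by
  have hD : (0:ℝ) < (d:ℝ) + 1 := by positivity
  set D : ℝ := (d:ℝ) + 1 with hDdef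
  set u : ℝ := (t + 1) / D with hu
  have htle : t ≤ (d:ℝ) := le_trans (le_abs_self t) ht
  have htge : -(d:ℝ) ≤ t := by
    have := neg_abs_le t; linarith [neg_le_neg ht]
  have hu1 : u ≤ 1 := by
    rw [hu, div_le_one hD]; linarith
  have hu2 : -1 < u := by
    rw [hu, lt_div_iff₀ hD]; linarith
  set m : ℕ → ℕ := fun k => max 1 ((k+1)/2) with hm
  set g : ℕ × ℕ → ℝ := fun kq =>
    c2p d (m kq.1 + kq.2) * (Nat.choose (2*(m kq.1 + kq.2)) kq.1 : ℝ)
      / D ^ (2*(m kq.1 + kq.2)) * t ^ kq.1 with hgdef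
  set h : ℕ × ℕ → ℝ := fun qk =>
    if qk.2 ≤ 2*(qk.1+1) then
      c2p d (qk.1+1) * (Nat.choose (2*(qk.1+1)) qk.2 : ℝ) / D ^ (2*(qk.1+1)) * t ^ qk.2
    else 0 with hhdef
  -- the nonnegative majorant
  set H : ℕ × ℕ → ℝ := fun qk =>
    if qk.2 ≤ 2*(qk.1+1) then
      c2p d (qk.1+1) * (Nat.choose (2*(qk.1+1)) qk.2 : ℝ) / D ^ (2*(qk.1+1)) * (d:ℝ) ^ qk.2
    else 0 with hHdef
  have hH0 : ∀ qk, 0 ≤ H qk := by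
    intro qk
    simp only [hHdef]
    split
    · have := c2p_pos d qk.1
      positivity
    · exact le_rfl
  have hHfib : ∀ q : ℕ, ∀ k ∉ Finset.range (2*(q+1)+1), H (q, k) = 0 := by
    intro q k hk
    simp only [Finset.mem_range] at hk
    simp only [hHdef]
    rw [if_neg (by omega)]
  have hHfibsum : ∀ q : ℕ, Summable (fun k => H (q, k)) :=
    fun q => summable_of_ne_finset_zero (hHfib q)
  have hbinom : ∀ (q : ℕ) (z : ℝ),
      ∑ k ∈ Finset.range (2*(q+1)+1), (Nat.choose (2*(q+1)) k : ℝ) * z ^ k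
        = (z+1) ^ (2*(q+1)) := by
    intro q z
    rw [add_pow z 1 (2*(q+1))]
    apply Finset.sum_congr rfl
    intro k hk
    rw [one_pow, mul_one, mul_comm]
  have hHtsum : ∀ q : ℕ, (∑' k, H (q, k)) = c2p d (q+1) := by
    intro q
    rw [tsum_eq_sum (hHfib q)]
    have : ∀ k ∈ Finset.range (2*(q+1)+1), H (q,k)
        = c2p d (q+1) / D ^ (2*(q+1)) * ((Nat.choose (2*(q+1)) k : ℝ) * (d:ℝ) ^ k) := by
      intro k hk
      simp only [Finset.mem_range] at hk
      simp only [hHdef]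
      rw [if_pos (by omega)]
      ring
    rw [Finset.sum_congr rfl this, ← Finset.mul_sum, hbinom q (d:ℝ)]
    rw [show (d:ℝ) + 1 = D from rfl]
    field_simp
  have hHsum : Summable H := by
    rw [summable_prod_of_nonneg hH0]
    constructor
    · exact hHfibsum
    · apply (summable_c2p d).congr
      intro q
      exact (hHtsum q).symm
  have habs_le : ∀ qk, |h qk| ≤ H qk := by
    intro qk
    simp only [hhdef, hHdef]
    split
    · have hA : (0:ℝ) ≤ c2p d (qk.1+1) * (Nat.choose (2*(qk.1+1)) qk.2 : ℝ) / D ^ (2*(qk.1+1)) := by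
        have := c2p_pos d qk.1
        positivity
      rw [abs_mul, abs_pow, abs_of_nonneg hA]
      exact mul_le_mul_of_nonneg_left (pow_le_pow_left₀ (abs_nonneg t) ht _) hA
    · simp
  have hhsum : Summable h := by
    rw [← summable_abs_iff]
    exact Summable.of_nonneg_of_le (fun qk => abs_nonneg _) habs_le hHsum
  have hhfibsum : ∀ q : ℕ, Summable (fun k => h (q, k)) := by
    intro q
    apply summable_of_ne_finset_zero (s := Finset.range (2*(q+1)+1))
    intro k hk
    simp only [Finset.mem_range] at hk
    simp only [hhdef]
    rw [if_neg (by omega)]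
  -- value of the h-sum
  have hhq : ∀ q : ℕ, (∑' k, h (q, k)) = c2p d (q+1) * u ^ (2*(q+1)) := by
    intro q
    rw [tsum_eq_sum (s := Finset.range (2*(q+1)+1)) ?side]
    case side =>
      intro k hk
      simp only [Finset.mem_range] at hk
      simp only [hhdef]
      rw [if_neg (by omega)]
    have : ∀ k ∈ Finset.range (2*(q+1)+1), h (q,k)
        = c2p d (q+1) / D ^ (2*(q+1)) * ((Nat.choose (2*(q+1)) k : ℝ) * t ^ k) := by
      intro k hk
      simp only [Finset.mem_range] at hk
      simp only [hhdef]
      rw [if_pos (by omega)]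
      ring
    rw [Finset.sum_congr rfl this, ← Finset.mul_sum, hbinom q t]
    rw [hu, div_pow]
    ring
  have hhtsum : (∑' qk, h qk) = ∑' q, c2p d (q+1) * u ^ (2*(q+1)) := by
    rw [Summable.tsum_prod' hhsum hhfibsum]
    exact tsum_congr hhq
  -- reindexing
  set φ : ℕ × ℕ → ℕ × ℕ := fun kq => (m kq.1 + kq.2 - 1, kq.1) with hφ
  have hm1 : ∀ k, 1 ≤ m k := fun k => le_max_left _ _
  have hmk : ∀ k, k ≤ 2 * m k := by
    intro k
    simp only [hm]
    omega
  have hφinj : Function.Injective φ := by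
    intro a b hab
    simp only [hφ, Prod.mk.injEq] at hab
    obtain ⟨h1, h2⟩ := hab
    rw [h2] at h1
    have hb := hm1 b.1
    have : a.2 = b.2 := by omega
    exact Prod.ext h2 this
  have hgφ : ∀ kq, g kq = h (φ kq) := by
    intro kq
    simp only [hgdef, hhdef, hφ]
    have h1 : m kq.1 + kq.2 - 1 + 1 = m kq.1 + kq.2 := by have := hm1 kq.1; omega
    rw [h1, if_pos (by have := hmk kq.1; omega)]
  have hsupp : Function.support h ⊆ Set.range φ := by
    intro qk hqk
    simp only [Function.mem_support, hhdef] at hqk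
    by_cases hc : qk.2 ≤ 2*(qk.1+1)
    · refine ⟨(qk.2, qk.1 + 1 - m qk.2), ?_⟩
      simp only [hφ]
      have hle : m qk.2 ≤ qk.1 + 1 := by
        simp only [hm]; omega
      have e1 : m qk.2 + (qk.1 + 1 - m qk.2) - 1 = qk.1 := by omega
      rw [e1]
    · rw [if_neg hc] at hqk
      exact absurd rfl hqk
  have hgsum : Summable g := by
    have := hhsum.comp_injective hφinj
    apply this.congr
    intro kq
    exact (hgφ kq).symm
  have hgtsum : (∑' kq, g kq) = ∑' qk, h qk := by
    rw [tsum_congr hgφ]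
    exact Function.Injective.tsum_eq hφinj hsupp
  -- fiberwise summability of g
  have hfib : ∀ k, Summable (fun q => g (k, q)) := fun k => hgsum.prod_factor k
  set dk0 : ℕ → ℝ := fun k =>
    (if k = 0 then (1:ℝ)/4 else 0) + (if k = 1 then t/4 else 0) with hdk0
  -- the per-k identity
  have hk : ∀ k, dcoef d k * t ^ k = dk0 k + ∑' q, g (k, q) := by
    intro k
    match k with
    | 0 =>
        have e1 : ∀ q : ℕ, g (0, q) = c2p d (q+1) / D ^ (2*(q+1)) := by
          intro q
          simp only [hgdef]
          have hm0 : m 0 = 1 := by simp only [hm]; omega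
          rw [hm0, Nat.add_comm 1 q, Nat.choose_zero_right, Nat.cast_one, mul_one,
            pow_zero, mul_one]
        have d0 : dcoef d 0 = 1/4 + ∑' q : ℕ, c2p d (q+1) / D ^ (2*(q+1)) := rfl
        rw [pow_zero, mul_one, d0, tsum_congr e1]
        simp only [hdk0]
        norm_num
    | 1 =>
        have e1 : ∀ q : ℕ, g (1, q)
            = (2*((q:ℝ)+1)) * c2p d (q+1) / D ^ (2*(q+1)) * t := by
          intro q
          simp only [hgdef]
          have hm1' : m 1 = 1 := by simp only [hm]; omega
          rw [hm1', Nat.add_comm 1 q, Nat.choose_one_right, pow_one]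
          push_cast
          ring
        have d1 : dcoef d 1
            = 1/4 + ∑' q : ℕ, (2*((q:ℝ)+1)) * c2p d (q+1) / D ^ (2*(q+1)) := rfl
        rw [pow_one, d1, tsum_congr e1, tsum_mul_right]
        simp only [hdk0]
        norm_num
        ring
    | (n+2) =>
        have hm2 : m (n+2) = (n+2+1)/2 := by simp only [hm]; omega
        have e1 : ∀ q : ℕ, g (n+2, q)
            = c2p d ((n+2+1)/2 + q) * (Nat.choose (2*((n+2+1)/2+q)) (n+2) : ℝ)
                / D ^ (2*((n+2+1)/2+q)) * t^(n+2) := by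
          intro q
          simp only [hgdef, hm2]
        have d2 : dcoef d (n+2) = ∑' q : ℕ,
            c2p d ((n+2+1)/2 + q) * (Nat.choose (2*((n+2+1)/2+q)) (n+2) : ℝ)
              / D ^ (2*((n+2+1)/2+q)) := rfl
        have hz : dk0 (n+2) = 0 := by simp [hdk0]
        rw [tsum_congr e1, tsum_mul_right, ← d2, hz, zero_add]
  -- outer summability
  have hout : Summable (fun k => ∑' q, g (k, q)) := by
    have hgs : Summable (fun s : (Σ _ : ℕ, ℕ) => g ((Equiv.sigmaEquivProd ℕ ℕ) s)) :=
      hgsum.comp_injective (Equiv.sigmaEquivProd ℕ ℕ).injective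
    exact hgs.sigma
  have hstep : HasSum (fun k => dk0 k + ∑' q, g (k, q)) ((1/4 + t/4) + ∑' qk, h qk) := by
    have a1 : HasSum (fun k : ℕ => if k = 0 then (1:ℝ)/4 else 0) (1/4) := hasSum_ite_eq 0 _
    have a2 : HasSum (fun k : ℕ => if k = 1 then t/4 else 0) (t/4) := hasSum_ite_eq 1 _
    have a3 : HasSum dk0 (1/4 + t/4) := a1.add a2
    have a4 : HasSum (fun k => ∑' q, g (k, q)) (∑' qk, h qk) := by
      rw [hout.hasSum_iff, ← hgtsum]
      exact (Summable.tsum_prod' hgsum hfib).symm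
    exact a3.add a4
  have hmain : HasSum (fun k => dcoef d k * t ^ k) ((1/4 + t/4) + ∑' qk, h qk) := by
    have := hstep
    rwa [show (fun k => dk0 k + ∑' q, g (k, q)) = (fun k => dcoef d k * t ^ k) from
      funext (fun k => (hk k).symm)] at this
  -- evaluate the double sum via the arcsin series
  have hq' : HasSum (fun q => c2p d (q+1) * u ^ (2*(q+1)))
      (D/(2*Real.pi) * u * Real.arcsin u) := by
    have base := (hasSum_aa_pow hu2 hu1).mul_left (D/(2*Real.pi) * u)
    have e : ∀ q : ℕ, D/(2*Real.pi) * u * (aa q * u^(2*q+1))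
        = c2p d (q+1) * u^(2*(q+1)) := by
      intro q
      rw [c2p_eq, show 2*(q+1) = (2*q+1)+1 by ring, pow_succ]
      ring
    rw [funext e] at base
    exact base
  have hval : (∑' qk, h qk) = D/(2*Real.pi) * u * Real.arcsin u := by
    rw [hhtsum]
    exact hq'.tsum_eq
  rw [hval] at hmain
  have hfinal : 1/4 + t/4 + D/(2*Real.pi) * u * Real.arcsin u
      = (t + 1) * (Real.pi - Real.arccos u) / (2*Real.pi) := by
    rw [Real.arccos_eq_pi_div_two_sub_arcsin]
    have hDu : D * u = t + 1 := by
      rw [hu]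
      field_simp
    have hπ : Real.pi ≠ 0 := Real.pi_ne_zero
    rw [show Real.pi - (Real.pi/2 - Real.arcsin u) = Real.pi/2 + Real.arcsin u by ring,
      ← hDu, show t = D*u - 1 by linarith [hDu]]
    field_simp
    ring
  rwa [hfinal] at hmain

lemma dcoef_nonneg (d k : ℕ) : 0 ≤ dcoef d k := by
  match k with
  | 0 =>
      have h : 0 ≤ ∑' q : ℕ, c2p d (q + 1) / ((d : ℝ) + 1) ^ (2 * (q + 1)) := by
        apply tsum_nonneg
        intro q
        have := c2p_pos d q
        positivity
      have e : dcoef d 0 = 1 / 4 + ∑' q : ℕ, c2p d (q + 1) / ((d : ℝ) + 1) ^ (2 * (q + 1)) := rfl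
      rw [e]; linarith
  | 1 =>
      have h : 0 ≤ ∑' q : ℕ, (2 * ((q : ℝ) + 1)) * c2p d (q + 1) / ((d : ℝ) + 1) ^ (2 * (q + 1)) := by
        apply tsum_nonneg
        intro q
        have := c2p_pos d q
        positivity
      have e : dcoef d 1 = 1 / 4 +
          ∑' q : ℕ, (2 * ((q : ℝ) + 1)) * c2p d (q + 1) / ((d : ℝ) + 1) ^ (2 * (q + 1)) := rfl
      rw [e]; linarith
  | (n+2) =>
      have e : dcoef d (n+2) = ∑' q : ℕ,
          c2p d ((n + 2 + 1) / 2 + q) * (Nat.choose (2 * ((n + 2 + 1) / 2 + q)) (n+2) : ℝ) /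
            ((d : ℝ) + 1) ^ (2 * ((n + 2 + 1) / 2 + q)) := rfl
      rw [e]
      apply tsum_nonneg
      intro q
      have hidx : (n + 2 + 1) / 2 + q = ((n + 2 + 1) / 2 + q - 1) + 1 := by omega
      rw [hidx]
      have := c2p_pos d ((n + 2 + 1) / 2 + q - 1)
      positivity

/-- Explicit feature map for the NTK with bias: the `ℓ²` feature vector
`φ(x) = (√d_k x^{⊗k})_{k≥0}` (indexed by multi-indices `Fin k → Fin d`) satisfies
`⟨φ(x),φ(y)⟩ = Σ_k d_k (x^T y)^k = x̃^T ỹ (π − arccos(x̃^T ỹ/(d+1)))/(2π)` where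
`x̃ = (x,1)`, `ỹ = (y,1)`, for `∥x∥ = ∥y∥ = √d`. -/
theorem ntk_feature_map (d : ℕ) (hd : 1 ≤ d)
    (x y : EuclideanSpace ℝ (Fin d))
    (hx : ‖x‖ = Real.sqrt d) (hy : ‖y‖ = Real.sqrt d) :
    (∑' s : Σ k : ℕ, (Fin k → Fin d),
        (Real.sqrt (dcoef d s.1) * ∏ i, x (s.2 i)) *
          (Real.sqrt (dcoef d s.1) * ∏ i, y (s.2 i)))
      = ((inner ℝ x y : ℝ) + 1) *
          (Real.pi - Real.arccos (((inner ℝ x y : ℝ) + 1) / ((d : ℝ) + 1))) / (2 * Real.pi) ∧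
    (∑' k : ℕ, dcoef d k * (inner ℝ x y : ℝ) ^ k)
      = ((inner ℝ x y : ℝ) + 1) *
          (Real.pi - Real.arccos (((inner ℝ x y : ℝ) + 1) / ((d : ℝ) + 1))) / (2 * Real.pi) := by
  set t : ℝ := (inner ℝ x y : ℝ) with htdef
  have hdd : Real.sqrt d * Real.sqrt d = (d:ℝ) := Real.mul_self_sqrt (Nat.cast_nonneg d)
  have ht : |t| ≤ (d:ℝ) := by
    calc |t| ≤ ‖x‖ * ‖y‖ := abs_real_inner_le_norm x y
      _ = (d:ℝ) := by rw [hx, hy, hdd]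
  have hM := hasSum_dcoef d hd t ht
  have part2 : (∑' k : ℕ, dcoef d k * t ^ k)
      = (t + 1) * (Real.pi - Real.arccos ((t + 1) / ((d : ℝ) + 1))) / (2 * Real.pi) :=
    hM.tsum_eq
  -- inner product as a sum
  have hinner : t = ∑ j, x j * y j := by
    rw [htdef]
    simp [PiLp.inner_apply, RCLike.inner_apply, map_one, mul_comm]
  -- Cauchy-Schwarz for the absolute values
  have cs : ∑ j, |x j * y j| ≤ (d:ℝ) := by
    set x' : EuclideanSpace ℝ (Fin d) := WithLp.toLp 2 (fun j => |x j|) with hx'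
    set y' : EuclideanSpace ℝ (Fin d) := WithLp.toLp 2 (fun j => |y j|) with hy'
    have h1 : (inner ℝ x' y' : ℝ) = ∑ j, |x j * y j| := by
      simp [PiLp.inner_apply, RCLike.inner_apply, hx', hy', abs_mul, mul_comm]
    have h2 : (inner ℝ x' y' : ℝ) ≤ ‖x'‖ * ‖y'‖ := real_inner_le_norm x' y'
    have h3 : ‖x'‖ = ‖x‖ := by
      rw [EuclideanSpace.norm_eq, EuclideanSpace.norm_eq]
      congr 1
      apply Finset.sum_congr rfl
      intro j _
      simp [hx', Real.norm_eq_abs, abs_abs]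
    have h4 : ‖y'‖ = ‖y‖ := by
      rw [EuclideanSpace.norm_eq, EuclideanSpace.norm_eq]
      congr 1
      apply Finset.sum_congr rfl
      intro j _
      simp [hy', Real.norm_eq_abs, abs_abs]
    rw [← h1]
    calc (inner ℝ x' y' : ℝ) ≤ ‖x'‖ * ‖y'‖ := h2
      _ = (d:ℝ) := by rw [h3, h4, hx, hy, hdd]
  have hcs0 : 0 ≤ ∑ j, |x j * y j| := Finset.sum_nonneg (fun j _ => abs_nonneg _)
  -- the sigma-indexed function
  set F : (Σ k : ℕ, (Fin k → Fin d)) → ℝ :=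
    fun s => dcoef d s.1 * ∏ i, (x (s.2 i) * y (s.2 i)) with hF
  have hterm : ∀ s : Σ k : ℕ, (Fin k → Fin d),
      (Real.sqrt (dcoef d s.1) * ∏ i, x (s.2 i)) *
        (Real.sqrt (dcoef d s.1) * ∏ i, y (s.2 i)) = F s := by
    intro s
    simp only [hF]
    rw [show (Real.sqrt (dcoef d s.1) * ∏ i, x (s.2 i)) *
        (Real.sqrt (dcoef d s.1) * ∏ i, y (s.2 i))
      = (Real.sqrt (dcoef d s.1) * Real.sqrt (dcoef d s.1)) *
          ((∏ i, x (s.2 i)) * ∏ i, y (s.2 i)) by ring]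
    rw [Real.mul_self_sqrt (dcoef_nonneg d s.1), ← Finset.prod_mul_distrib]
  -- fiberwise sums
  have hfibval : ∀ k : ℕ, (∑' f : Fin k → Fin d, F ⟨k, f⟩) = dcoef d k * t ^ k := by
    intro k
    rw [tsum_fintype]
    simp only [hF]
    rw [← Finset.mul_sum]
    congr 1
    have hps := Finset.prod_univ_sum (fun _ : Fin k => (Finset.univ : Finset (Fin d)))
      (fun _ j => x j * y j)
    rw [Fintype.piFinset_univ] at hps
    rw [← hps, Finset.prod_const, Finset.card_univ, Fintype.card_fin, hinner]
  -- absolute values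
  have habsF : ∀ s : Σ k : ℕ, (Fin k → Fin d),
      |F s| = dcoef d s.1 * ∏ i, |x (s.2 i) * y (s.2 i)| := by
    intro s
    simp only [hF]
    rw [abs_mul, abs_of_nonneg (dcoef_nonneg d s.1), Finset.abs_prod]
  have hfibabs : ∀ k : ℕ, (∑' f : Fin k → Fin d, |F ⟨k, f⟩|) ≤ dcoef d k * (d:ℝ)^k := by
    intro k
    rw [tsum_fintype]
    calc ∑ f : Fin k → Fin d, |F ⟨k,f⟩|
        = dcoef d k * ∑ f : Fin k → Fin d, ∏ i, |x (f i) * y (f i)| := by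
          rw [Finset.mul_sum]
          exact Finset.sum_congr rfl (fun f _ => habsF ⟨k,f⟩)
      _ = dcoef d k * (∑ j, |x j * y j|)^k := by
          congr 1
          have hps := Finset.prod_univ_sum (fun _ : Fin k => (Finset.univ : Finset (Fin d)))
            (fun _ j => |x j * y j|)
          rw [Fintype.piFinset_univ] at hps
          rw [← hps, Finset.prod_const, Finset.card_univ, Fintype.card_fin]
      _ ≤ dcoef d k * (d:ℝ)^k :=
          mul_le_mul_of_nonneg_left (pow_le_pow_left₀ hcs0 cs k) (dcoef_nonneg d k)
  have hsumd : Summable (fun k => dcoef d k * (d:ℝ)^k) := by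
    have habsd : |(d:ℝ)| ≤ (d:ℝ) := by rw [abs_of_nonneg (Nat.cast_nonneg d)]
    exact (hasSum_dcoef d hd (d:ℝ) habsd).summable
  have hfibsummable : ∀ k : ℕ, Summable (fun f : Fin k → Fin d => F ⟨k, f⟩) :=
    fun k => Summable.of_finite
  have hFsum : Summable F := by
    rw [← summable_abs_iff, summable_sigma_of_nonneg (fun s => abs_nonneg _)]
    exact ⟨fun k => Summable.of_finite,
      Summable.of_nonneg_of_le (fun k => tsum_nonneg (fun f => abs_nonneg _)) hfibabs hsumd⟩
  have part1 : (∑' s : Σ k : ℕ, (Fin k → Fin d),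
        (Real.sqrt (dcoef d s.1) * ∏ i, x (s.2 i)) *
          (Real.sqrt (dcoef d s.1) * ∏ i, y (s.2 i)))
      = (t + 1) * (Real.pi - Real.arccos ((t + 1) / ((d : ℝ) + 1))) / (2 * Real.pi) := by
    rw [tsum_congr hterm, Summable.tsum_sigma' hfibsummable hFsum, tsum_congr hfibval]
    exact part2
  exact ⟨part1, part2⟩
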